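/- For each natural number n, define V_n : ℝ \ {0} → ℝ by V_n(q) = q^(4n) + V(q)·P_n(q), where V(q) = −q⁹ + q⁷ − q⁵ + q³ + q + q⁻¹ + q⁻³ − q⁻⁵ + q⁻⁷ − q⁻⁹ and P_n(q) = ∑_{k=1}^{n} (q^(4k−3) − q^(4k−1)). Then the second (real) derivative of V_n at q = 1 vanishes: V_n″(1) = 0. -/

import Mathlib

/-- The Jones polynomial of the pretzel link `P(3,−2,2,−3)`. -/
noncomputable def pretzelV : ℝ → ℝ := fun q =>
  -q ^ 9 + q ^ 7 - q ^ 5 + q ^ 3 + q + q⁻¹ + (q⁻¹) ^ 3 - (q⁻¹) ^ 5 + (q⁻¹) ^ 7 - (q⁻¹) ^ 9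

/-- `Pₙ(q) = ∑_{k=1}^{n} (q^(4k−3) − q^(4k−1))`. -/
noncomputable def Pfun (n : ℕ) : ℝ → ℝ := fun q =>
  ∑ k ∈ Finset.Icc 1 n, (q ^ (4 * k - 3) - q ^ (4 * k - 1))

/-- The Jones polynomial of `KT_{2,n}`: `Vₙ(q) = q^(4n) + V(q)·Pₙ(q)`. -/
noncomputable def Vfun (n : ℕ) : ℝ → ℝ := fun q =>
  q ^ (4 * n) + pretzelV q * Pfun n q

/-! By Leibniz' rule,
`Vₙ″(1) = 4n(4n - 1) + V″(1) Pₙ(1) + 2 V′(1) Pₙ′(1) + V(1) Pₙ″(1)`.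
Here `Pₙ(1) = 0`, `V′(1) = 0` because `V(q⁻¹) = V(q)`, `V(1) = 2`, and
`Pₙ″(1) = ∑_{k=1}^{n} (10 - 16k) = 2n - 8n²`, so the two surviving terms cancel. -/

section

variable {𝕜 : Type*} [NontriviallyNormedField 𝕜]

theorem iteratedDeriv_two_fun_mul {f g : 𝕜 → 𝕜} {x : 𝕜} (hf : ContDiffAt 𝕜 2 f x)
    (hg : ContDiffAt 𝕜 2 g x) :
    iteratedDeriv 2 (fun y => f y * g y) x =
      iteratedDeriv 2 f x * g x + 2 * deriv f x * deriv g x + f x * iteratedDeriv 2 g x := by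
  rw [iteratedDeriv_fun_mul hf hg]
  norm_num [Finset.sum_range_succ]
  ring

theorem deriv_one_eq_zero_of_apply_inv [CharZero 𝕜] {f : 𝕜 → 𝕜} (hf : ∀ x, f x⁻¹ = f x) :
    deriv f 1 = 0 := by
  by_cases hd : DifferentiableAt 𝕜 f 1
  · have hcomp : deriv (f ∘ Inv.inv) 1 = -deriv f 1 := by
      rw [deriv_comp _ (by rwa [inv_one]) (differentiableAt_inv one_ne_zero), inv_one, deriv_inv]
      ring
    rw [show f ∘ Inv.inv = f from funext hf] at hcomp
    exact CharZero.eq_neg_self_iff.mp hcomp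
  · exact deriv_zero_of_not_differentiableAt hd

end

lemma pretzelV_inv (q : ℝ) : pretzelV q⁻¹ = pretzelV q := by
  simp only [pretzelV, inv_inv]
  ring

lemma pretzelV_one : pretzelV 1 = 2 := by norm_num [pretzelV]

lemma contDiffAt_pretzelV {q : ℝ} (hq : q ≠ 0) : ContDiffAt ℝ 2 pretzelV q := by
  unfold pretzelV
  fun_prop (disch := assumption)

lemma Pfun_one (n : ℕ) : Pfun n 1 = 0 := by simp [Pfun]

lemma contDiff_Pfun (n : ℕ) : ContDiff ℝ 2 (Pfun n) := by
  unfold Pfun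
  fun_prop

lemma sum_Icc_descFactorial_two_sub (n : ℕ) :
    ∑ k ∈ Finset.Icc 1 n, (((4 * k - 3).descFactorial 2 : ℝ) - (4 * k - 1).descFactorial 2) =
      2 * n - 8 * n ^ 2 := by
  induction n with
  | zero => simp
  | succ m ih =>
    rw [Finset.sum_Icc_succ_top (by omega), ih, Nat.cast_descFactorial_two,
      Nat.cast_descFactorial_two, show 4 * (m + 1) - 3 = 4 * m + 1 by omega,
      show 4 * (m + 1) - 1 = 4 * m + 3 by omega]
    push_cast
    ring

lemma iteratedDeriv_two_Pfun_one (n : ℕ) : iteratedDeriv 2 (Pfun n) 1 = 2 * n - 8 * n ^ 2 := by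
  unfold Pfun
  rw [iteratedDeriv_fun_sum (fun k _ => by fun_prop), ← sum_Icc_descFactorial_two_sub n]
  refine Finset.sum_congr rfl fun k _ => ?_
  rw [iteratedDeriv_fun_sub (by fun_prop) (by fun_prop), iteratedDeriv_pow, iteratedDeriv_pow,
    one_pow, one_pow, mul_one, mul_one]

/-- `Vₙ″(1) = 0`. -/
theorem Vfun_second_deriv_at_one (n : ℕ) : iteratedDeriv 2 (Vfun n) 1 = 0 := by
  have hV := contDiffAt_pretzelV one_ne_zero
  have hP := (contDiff_Pfun n).contDiffAt (x := 1)
  unfold Vfun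
  rw [iteratedDeriv_fun_add (by fun_prop) (hV.mul hP), iteratedDeriv_two_fun_mul hV hP,
    iteratedDeriv_pow, deriv_one_eq_zero_of_apply_inv pretzelV_inv, Pfun_one, pretzelV_one,
    iteratedDeriv_two_Pfun_one, one_pow, mul_one, Nat.cast_descFactorial_two]
  push_cast
  ring
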